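/- arXiv:1110.3128 — 3 statements merged into one kernel-verified Lean document; each statement's English description precedes it below -/
import Mathlib

section
/- If $D$ is a simplicial 2-ball, $W$ a set of boundary vertices of $D$ such that every edge of $D$ joining two vertices of $W$ lies in $\partial D$, and $I$ is the maximal subcomplex of $D$ on the vertex set $V \setminus W$ (where $V$ is the vertex set of $D$), and $I$ is connected, then the closed star neighbourhood $\mathrm{Star}_D I$ equals $D$. -/
/-!
Let `F` be a facet containing a given face. If a vertex of `F` is outside `W`, it is a vertex
of `I` and the face lies in the star. Otherwise every edge of `F` joins two vertices of `W`, hence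
is a boundary edge and lies in no other facet, so `F` meets every other facet in at most one
vertex. The points of `|D|` supported on `F` and those supported on the other facets then form two
closed sets covering `|D|` that meet in finitely many points; since a disk minus finitely many
points is connected, `F` must be the only facet. But then every vertex of `D` lies in `W`, and
`I` is empty, contradicting its connectedness.
-/

namespace SCPaper

/-- An abstract simplicial complex on vertex type `V`. -/
structure SComplex (V : Type) where
  faces : Set (Finset V)
  nonempty_mem : ∀ s ∈ faces, s.Nonempty
  down_closed : ∀ s ∈ faces, ∀ t ⊆ s, t.Nonempty → t ∈ faces

variable {V : Type} [DecidableEq V]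

/-- The geometric realization of a simplicial complex, as a subspace of `V → ℝ`. -/
def geomRealization (K : SComplex V) : Set (V → ℝ) :=
  {f | ∃ s ∈ K.faces, (∀ v, 0 ≤ f v) ∧ (∀ v ∉ s, f v = 0) ∧ s.sum f = 1}

/-- `K` is a simplicial `d`-ball: its realization is homeomorphic to a closed `d`-ball. -/
def IsBall (d : ℕ) (K : SComplex V) : Prop :=
  Nonempty ((geomRealization K) ≃ₜ (Metric.closedBall (0 : EuclideanSpace ℝ (Fin d)) 1))

/-- The vertex set of a complex. -/
def vertexSet (K : SComplex V) : Set V := {v | {v} ∈ K.faces}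

/-- The facets (maximal faces) of a complex. -/
def facets (K : SComplex V) : Set (Finset V) :=
  {s | s ∈ K.faces ∧ ∀ t ∈ K.faces, s ⊆ t → s = t}

/-- A complex is pure of dimension `d`. -/
def IsPure (d : ℕ) (K : SComplex V) : Prop :=
  (∀ s ∈ K.faces, s.card ≤ d + 1) ∧ ∀ s ∈ K.faces, ∃ t ∈ K.faces, s ⊆ t ∧ t.card = d + 1

/-- A complex has dimension `n`. -/
def HasDim (n : ℕ) (K : SComplex V) : Prop :=
  (∀ s ∈ K.faces, s.card ≤ n + 1) ∧ ∃ s ∈ K.faces, s.card = n + 1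

/-- The full simplex on a vertex set `s`. -/
def simplexOn (s : Finset V) : SComplex V where
  faces := {t | t ⊆ s ∧ t.Nonempty}
  nonempty_mem := fun t ht => ht.2
  down_closed := fun a ha t ht hne => ⟨ht.trans ha.1, hne⟩

/-- Intersection of two complexes. -/
def interC (K L : SComplex V) : SComplex V where
  faces := K.faces ∩ L.faces
  nonempty_mem := fun s hs => K.nonempty_mem s hs.1
  down_closed := fun s hs t ht hne =>
    ⟨K.down_closed s hs.1 t ht hne, L.down_closed s hs.2 t ht hne⟩

/-- The boundary complex of a pure `d`-dimensional ball-like complex: it is generated by the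
`(d-1)`-dimensional faces (of cardinality `d`) contained in exactly one facet. -/
def boundaryC (d : ℕ) (K : SComplex V) : SComplex V where
  faces := {t | t.Nonempty ∧ ∃ s ∈ K.faces, t ⊆ s ∧ s.card = d ∧ ∃! F, F ∈ facets K ∧ s ⊆ F}
  nonempty_mem := fun s hs => hs.1
  down_closed := by
    rintro s ⟨-, u, hu, hsu, hcard, hF⟩ t ht hne
    exact ⟨hne, u, hu, ht.trans hsu, hcard, hF⟩

/-- The closed star `Star_K I`: all faces of `K` contained in a face meeting a vertex of `I`. -/
def starC (K I : SComplex V) : SComplex V where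
  faces := {t | t ∈ K.faces ∧ ∃ s ∈ K.faces, t ⊆ s ∧ ∃ v ∈ s, {v} ∈ I.faces}
  nonempty_mem := fun s hs => K.nonempty_mem s hs.1
  down_closed := by
    rintro s ⟨hsK, u, hu, hsu, hv⟩ t ht hne
    exact ⟨K.down_closed s hsK t ht hne, u, hu, ht.trans hsu, hv⟩

/-- The maximal (full) subcomplex of `K` on a vertex set `S`. -/
def fullSub (K : SComplex V) (S : Set V) : SComplex V where
  faces := {t | t ∈ K.faces ∧ ∀ v ∈ t, v ∈ S}
  nonempty_mem := fun s hs => K.nonempty_mem s hs.1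
  down_closed := fun s hs t ht hne =>
    ⟨K.down_closed s hs.1 t ht hne, fun v hv => hs.2 v (ht hv)⟩

/-- The closure of the complement of a subcomplex `L` in `K`: the subcomplex generated by
the faces of `K` not in `L`. -/
def compClosure (K L : SComplex V) : SComplex V where
  faces := {t | t.Nonempty ∧ ∃ s ∈ K.faces, s ∉ L.faces ∧ t ⊆ s}
  nonempty_mem := fun s hs => hs.1
  down_closed := by
    rintro s ⟨-, u, hu, huL, hsu⟩ t ht hne
    exact ⟨hne, u, hu, huL, ht.trans hsu⟩

/-- Two vertices are connected by an edge path in `K`. -/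
def Reach (K : SComplex V) : V → V → Prop :=
  Relation.ReflTransGen (fun a b => ({a, b} : Finset V) ∈ K.faces)

/-- A complex is connected (as a 1-skeleton graph, nonempty). -/
def IsConnectedC (K : SComplex V) : Prop :=
  (∃ v, v ∈ vertexSet K) ∧ ∀ u v, u ∈ vertexSet K → v ∈ vertexSet K → Reach K u v

/-- The connected component of the vertex `v` in `K`. -/
def componentOf (K : SComplex V) (v : V) : SComplex V where
  faces := {t | t ∈ K.faces ∧ ∀ u ∈ t, Reach K v u}
  nonempty_mem := fun s hs => K.nonempty_mem s hs.1
  down_closed := fun s hs t ht hne =>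
    ⟨K.down_closed s hs.1 t ht hne, fun u hu => hs.2 u (ht hu)⟩

/-- `C` is a connected component of `K`. -/
def IsComponentOf (K C : SComplex V) : Prop :=
  ∃ v, {v} ∈ K.faces ∧ C = componentOf K v

/-- An interior vertex of a `3`-ball `B`: a vertex not on the boundary. -/
def IsInteriorVertex (B : SComplex V) (v : V) : Prop :=
  {v} ∈ B.faces ∧ {v} ∉ (boundaryC 3 B).faces

/-- The interior graph of a `3`-ball: interior vertices and interior edges. -/
def interiorGraph (B : SComplex V) : SComplex V where
  faces := {t | t ∈ B.faces ∧ t.card ≤ 2 ∧ ∀ v ∈ t, IsInteriorVertex B v}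
  nonempty_mem := fun s hs => B.nonempty_mem s hs.1
  down_closed := fun s hs t ht hne =>
    ⟨B.down_closed s hs.1 t ht hne, le_trans (Finset.card_le_card ht) hs.2.1,
      fun v hv => hs.2.2 v (ht hv)⟩

/-- A maximal interior graph component of a `3`-ball. -/
def IsMaxIntComp (B I : SComplex V) : Prop :=
  IsComponentOf (interiorGraph B) I

/-- A spanning edge of a `3`-ball: an edge not on the boundary with both endpoints on it. -/
def IsSpanningEdge (B : SComplex V) (e : Finset V) : Prop :=
  e ∈ B.faces ∧ e.card = 2 ∧ e ∉ (boundaryC 3 B).faces ∧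
    ∀ v ∈ e, {v} ∈ (boundaryC 3 B).faces

/-- A spanning edge `e` is strict if there is no maximal interior graph component `I` such that
both endpoints of `e` lie in exactly one connected component of `∂B ∩ Star_B I`. -/
def IsStrictSpanningEdge (B : SComplex V) (e : Finset V) : Prop :=
  IsSpanningEdge B e ∧
    ¬ ∃ I, IsMaxIntComp B I ∧
      ∃! C, IsComponentOf (interC (boundaryC 3 B) (starC B I)) C ∧ ∀ v ∈ e, {v} ∈ C.faces

/-- A `3`-ball is reduced: every interior `2`-face has at most one boundary edge. -/
def IsReduced (B : SComplex V) : Prop :=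
  ∀ s ∈ B.faces, s.card = 3 → s ∉ (boundaryC 3 B).faces →
    ({e : Finset V | e ⊆ s ∧ e.card = 2 ∧ e ∈ (boundaryC 3 B).faces}).Subsingleton

/-- Constructibility of pure `d`-dimensional simplicial complexes. -/
inductive Constructible : ℕ → SComplex V → Prop
  | simplex (d : ℕ) (K : SComplex V) (s : Finset V) (hcard : s.card = d + 1)
      (hK : K.faces = {t | t ⊆ s ∧ t.Nonempty}) : Constructible d K
  | union (d : ℕ) (K C₁ C₂ : SComplex V)
      (h₁ : C₁.faces ⊆ K.faces) (h₂ : C₂.faces ⊆ K.faces)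
      (hp₁ : IsPure d C₁) (hp₂ : IsPure d C₂)
      (hu : K.faces = C₁.faces ∪ C₂.faces)
      (hdim : HasDim (d - 1) (interC C₁ C₂))
      (hc₁ : Constructible d C₁) (hc₂ : Constructible d C₂)
      (hci : Constructible (d - 1) (interC C₁ C₂)) : Constructible d K

/-- Shellability of a pure `d`-dimensional complex. -/
def Shellable (d : ℕ) (K : SComplex V) : Prop :=
  ∃ (t : ℕ) (F : Fin t → Finset V),
    0 < t ∧ Function.Injective F ∧
    (∀ i, F i ∈ K.faces ∧ (F i).card = d + 1) ∧
    (∀ s, s ∈ K.faces ↔ s.Nonempty ∧ ∃ i, s ⊆ F i) ∧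
    ∀ k : Fin t, 0 < (k : ℕ) →
      (∃ s : Finset V, s.Nonempty ∧ s ⊆ F k ∧ ∃ j, j < k ∧ s ⊆ F j) ∧
      ∀ s : Finset V, (s.Nonempty ∧ s ⊆ F k ∧ ∃ j, j < k ∧ s ⊆ F j) →
        ∃ u : Finset V, s ⊆ u ∧ u.card = d ∧ u ⊆ F k ∧ ∃ j, j < k ∧ u ⊆ F j

/-- A witness for a construction (deconstruction) of a constructible complex. -/
inductive ConstructionOf (d : ℕ) : SComplex V → Type
  | simplex (K : SComplex V) (s : Finset V) (hcard : s.card = d + 1)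
      (hK : K.faces = {t | t ⊆ s ∧ t.Nonempty}) : ConstructionOf d K
  | union (K C₁ C₂ : SComplex V)
      (h₁ : C₁.faces ⊆ K.faces) (h₂ : C₂.faces ⊆ K.faces)
      (hp₁ : IsPure d C₁) (hp₂ : IsPure d C₂)
      (hu : K.faces = C₁.faces ∪ C₂.faces)
      (hdim : HasDim (d - 1) (interC C₁ C₂))
      (hci : Constructible (d - 1) (interC C₁ C₂))
      (t₁ : ConstructionOf d C₁) (t₂ : ConstructionOf d C₂) : ConstructionOf d K

/-- The decomposition steps `(B', B'₁, B'₂)` occurring in a construction. -/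
def ConstructionOf.nodes {d : ℕ} :
    {K : SComplex V} → ConstructionOf d K → Set (SComplex V × SComplex V × SComplex V)
  | _, .simplex _ _ _ _ => ∅
  | _, .union K C₁ C₂ _ _ _ _ _ _ _ t₁ t₂ => insert (K, C₁, C₂) (t₁.nodes ∪ t₂.nodes)

end SCPaper

open Set Metric Filter Topology Function Finset

theorem isPreconnected_closedBall_diff_of_countable {E : Type*} [NormedAddCommGroup E]
    [NormedSpace ℝ E] (hE : 1 < Module.rank ℝ E) {Q : Set E} (hQ : Q.Countable) :
    IsPreconnected (closedBall (0 : E) 1 \ Q) := by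
  have : Nontrivial E := (rank_pos_iff_nontrivial (R := ℝ)).1 (zero_lt_one.trans hE)
  set f : E → E := (↑) ∘ Homeomorph.unitBall
  have hf : Injective f := Subtype.val_injective.comp Homeomorph.unitBall.injective
  have hrange : range f = ball 0 1 := by
    rw [range_comp, Homeomorph.range_coe, image_univ, Subtype.range_coe]
  have hball : IsPreconnected (ball (0 : E) 1 \ Q) := by
    rw [← hrange, ← image_compl_preimage]
    exact ((hQ.preimage hf).isConnected_compl_of_one_lt_rank hE).isPreconnected.image _
      (by fun_prop : Continuous f).continuousOn
  refine hball.subset_closure (sdiff_subset_sdiff_left ball_subset_closedBall) ?_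
  rw [← closure_ball (0 : E) one_ne_zero]
  exact sdiff_subset.trans
    (closure_minimal ((hQ.dense_compl ℝ).open_subset_closure_inter isOpen_ball) isClosed_closure)

theorem isClosed_setOf_support_subset {ι : Type*} (s : Set ι) :
    IsClosed {f : ι → ℝ | support f ⊆ s} := by
  simp only [support_subset_iff', ofPred_forall]
  exact isClosed_biInter fun i _ => isClosed_eq (continuous_apply i) continuous_const

namespace SCPaper

variable {V : Type}

theorem IsBall.isCompact {d : ℕ} {K : SComplex V} (hK : IsBall d K) :
    IsCompact (geomRealization K) := by
  obtain ⟨e⟩ := hK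
  have := isCompact_iff_compactSpace.mp (isCompact_closedBall (0 : EuclideanSpace ℝ (Fin d)) 1)
  exact isCompact_iff_compactSpace.mpr e.symm.compactSpace

theorem IsBall.isPreconnected_diff {d : ℕ} (hd : 2 ≤ d) {K : SComplex V} (hK : IsBall d K)
    {P : Set (V → ℝ)} (hP : P.Countable) : IsPreconnected (geomRealization K \ P) := by
  obtain ⟨e⟩ := hK
  set g : closedBall (0 : EuclideanSpace ℝ (Fin d)) 1 → V → ℝ := (↑) ∘ e.symm
  have hg : Injective g := Subtype.val_injective.comp e.symm.injective
  have hrange : range g = geomRealization K := by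
    rw [range_comp, e.symm.range_coe, image_univ, Subtype.range_coe]
  have hrank : 1 < Module.rank ℝ (EuclideanSpace ℝ (Fin d)) := by
    rw [← Module.finrank_eq_rank, finrank_euclideanSpace_fin]
    exact_mod_cast hd
  rw [← hrange, ← image_compl_preimage]
  refine IsPreconnected.image ?_ g (by fun_prop : Continuous g).continuousOn
  rw [← Topology.IsInducing.subtypeVal.isPreconnected_image,
    image_compl_eq_range_sdiff_image Subtype.val_injective, Subtype.range_coe]
  exact isPreconnected_closedBall_diff_of_countable hrank ((hP.preimage hg).image _)

theorem faces_finite {K : SComplex V} (hfin : (vertexSet K).Finite) : K.faces.Finite :=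
  hfin.toFinset.powerset.finite_toSet.subset fun s hs =>
    Finset.mem_coe.2 <| Finset.mem_powerset.2 fun v hv =>
      hfin.mem_toFinset.2 <|
        K.down_closed s hs {v} (singleton_subset_iff.2 hv) (singleton_nonempty v)

theorem facets_finite {K : SComplex V} (hfin : (vertexSet K).Finite) : (facets K).Finite :=
  (faces_finite hfin).subset fun _ hs => hs.1

theorem exists_facet_superset {K : SComplex V} (hfin : (vertexSet K).Finite) {t : Finset V}
    (ht : t ∈ K.faces) : ∃ F ∈ facets K, t ⊆ F := by
  obtain ⟨F, htF, hF⟩ := (faces_finite hfin).exists_le_maximal ht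
  exact ⟨F, ⟨hF.prop, fun G hG hFG => le_antisymm hFG (hF.le_of_ge hG hFG)⟩, htF⟩

theorem exists_facet_support_subset {K : SComplex V} (hfin : (vertexSet K).Finite)
    {p : V → ℝ} (hp : p ∈ geomRealization K) : ∃ F ∈ facets K, support p ⊆ F := by
  obtain ⟨s, hs, -, hzero, -⟩ := hp
  obtain ⟨F, hF, hsF⟩ := exists_facet_superset hfin hs
  exact ⟨F, hF, support_subset_iff'.2 hzero |>.trans (coe_subset.2 hsF)⟩

theorem eq_of_mem_facets_of_mem_boundaryC {d : ℕ} {K : SComplex V} {e F G : Finset V}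
    (he : e ∈ (boundaryC d K).faces) (hcard : #e = d) (hF : F ∈ facets K) (hG : G ∈ facets K)
    (heF : e ⊆ F) (heG : e ⊆ G) : F = G := by
  obtain ⟨-, s, -, hes, hs, _, -, huniq⟩ := he
  obtain rfl : e = s := eq_of_subset_of_card_le hes (hs.trans hcard.symm).le
  exact (huniq F ⟨hF, heF⟩).trans (huniq G ⟨hG, heG⟩).symm

noncomputable def barycenter (s : Finset V) : V → ℝ :=
  (s : Set V).indicator fun _ => (#s : ℝ)⁻¹

theorem support_barycenter {s : Finset V} (hs : s.Nonempty) : support (barycenter s) = s := by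
  rw [barycenter, support_indicator,
    support_const (inv_ne_zero (Nat.cast_ne_zero.2 hs.card_ne_zero)), inter_univ]

theorem barycenter_mem_geomRealization {K : SComplex V} {s : Finset V} (hs : s ∈ K.faces) :
    barycenter s ∈ geomRealization K := by
  refine ⟨s, hs, indicator_nonneg fun _ _ => by positivity, fun v hv => indicator_of_notMem hv _,
    ?_⟩
  rw [show s.sum (barycenter s) = ∑ _v ∈ s, (#s : ℝ)⁻¹ from
      sum_congr rfl fun v hv => indicator_of_mem (mem_coe.2 hv) _, sum_const, nsmul_eq_mul,
    mul_inv_cancel₀ (by simpa using (K.nonempty_mem s hs).ne_empty)]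

theorem support_barycenter_subset_iff {K : SComplex V} {F G : Finset V} (hF : F ∈ facets K)
    (hG : G ∈ facets K) : support (barycenter F) ⊆ G ↔ F = G := by
  rw [support_barycenter (K.nonempty_mem F hF.1), Finset.coe_subset]
  exact ⟨hF.2 G hG.1, fun h => h.le⟩

theorem zero_notMem_geomRealization (K : SComplex V) : (0 : V → ℝ) ∉ geomRealization K := by
  rintro ⟨s, -, -, -, hs⟩
  simp at hs

variable [DecidableEq V]

theorem card_inter_le_one_of_edges_mem_boundaryC {K : SComplex V} {F G : Finset V}
    (hbd : ∀ e ⊆ F, #e = 2 → e ∈ (boundaryC 2 K).faces) (hF : F ∈ facets K) (hG : G ∈ facets K)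
    (hGF : G ≠ F) : #(F ∩ G) ≤ 1 := by
  by_contra! h
  obtain ⟨u, hu, v, hv, huv⟩ := one_lt_card.1 h
  have hedge : {u, v} ⊆ F ∩ G := insert_subset_iff.2 ⟨hu, singleton_subset_iff.2 hv⟩
  exact hGF (eq_of_mem_facets_of_mem_boundaryC (hbd _ (hedge.trans inter_subset_left)
    (card_pair huv)) (card_pair huv) hG hF (hedge.trans inter_subset_right)
    (hedge.trans inter_subset_left))

theorem single_mem_geomRealization {K : SComplex V} {v : V} (hv : v ∈ vertexSet K) :
    (Pi.single v 1 : V → ℝ) ∈ geomRealization K :=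
  ⟨{v}, hv, (Pi.single_nonneg.2 zero_le_one : (0 : V → ℝ) ≤ Pi.single v 1),
    fun u hu => Pi.single_eq_of_ne (by simpa using hu) _, by simp⟩

theorem exists_eq_single_of_support_subsingleton {K : SComplex V} {p : V → ℝ}
    (hp : p ∈ geomRealization K) (h : (support p).Subsingleton) : ∃ v, p = Pi.single v 1 := by
  obtain ⟨s, -, -, hzero, hsum⟩ := hp
  obtain ⟨v, hv⟩ : (support p).Nonempty := by
    rw [Set.nonempty_iff_ne_empty, Ne, support_eq_empty_iff]
    rintro rfl
    simp at hsum
  have hoff : ∀ u ≠ v, p u = 0 := fun u hu => notMem_support.1 fun h' => hu (h h' hv)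
  have hvs : v ∈ s := by_contra fun h' => hv (hzero v h')
  have hpv : p v = 1 := by rw [← hsum, sum_eq_single_of_mem v hvs fun u _ => hoff u]
  refine ⟨v, funext fun u => ?_⟩
  rcases eq_or_ne u v with rfl | hu
  · simp [hpv]
  · simp [hu, hoff u hu]

theorem vertexSet_finite_of_isCompact {K : SComplex V} (hK : IsCompact (geomRealization K)) :
    (vertexSet K).Finite := by
  by_contra hinf
  have : Infinite (vertexSet K) := infinite_coe_iff.2 hinf
  have hlim : Tendsto (fun v : vertexSet K => (Pi.single (v : V) 1 : V → ℝ)) cofinite (𝓝 0) := by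
    refine tendsto_pi_nhds.2 fun u => tendsto_const_nhds.congr' ?_
    filter_upwards [Subtype.val_injective.tendsto_cofinite.eventually (eventually_cofinite_ne u)]
      with v hv using by simp [hv.symm]
  exact zero_notMem_geomRealization K <| hK.isClosed.mem_of_tendsto hlim <|
    Eventually.of_forall fun v => single_mem_geomRealization v.2

theorem facets_eq_singleton_of_card_inter_le_one {K : SComplex V}
    (hfin : (vertexSet K).Finite)
    (hconn : ∀ P : Set (V → ℝ), P.Finite → IsPreconnected (geomRealization K \ P))
    {F : Finset V} (hF : F ∈ facets K) (hmeet : ∀ G ∈ facets K, G ≠ F → #(F ∩ G) ≤ 1) :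
    facets K = {F} := by
  refine eq_singleton_iff_unique_mem.2 ⟨hF, fun G hG => by_contra fun hGF => ?_⟩
  set A : Set (V → ℝ) := {p | support p ⊆ F}
  set B : Set (V → ℝ) := ⋃ H ∈ facets K \ {F}, {p | support p ⊆ H}
  set P := geomRealization K ∩ (A ∩ B)
  have hPfin : P.Finite := by
    refine (F.finite_toSet.image fun v => Pi.single v (1 : ℝ)).subset ?_
    rintro p ⟨hpX, hpF, hpB⟩
    obtain ⟨H, ⟨hH, hHF⟩, hpH⟩ := mem_iUnion₂.1 hpB
    have hsub : support p ⊆ ↑(F ∩ H) := by rw [coe_inter]; exact subset_inter hpF hpH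
    obtain ⟨v, rfl⟩ := exists_eq_single_of_support_subsingleton hpX fun a ha b hb =>
      card_le_one.1 (hmeet H hH hHF) a (hsub ha) b (hsub hb)
    exact ⟨v, hpF (by simp [Pi.support_single_of_ne]), rfl⟩
  have hA : IsClosed A := isClosed_setOf_support_subset _
  have hB : IsClosed B := ((facets_finite hfin).subset sdiff_subset).isClosed_biUnion
    fun H _ => isClosed_setOf_support_subset _
  have hcover : geomRealization K \ P ⊆ A ∪ B := by
    rintro p ⟨hpX, -⟩
    obtain ⟨H, hH, hpH⟩ := exists_facet_support_subset hfin hpX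
    rcases eq_or_ne H F with rfl | hHF
    · exact Or.inl hpH
    · exact Or.inr (mem_biUnion ⟨hH, hHF⟩ hpH)
  have hFA : barycenter F ∈ A := (support_barycenter_subset_iff hF hF).2 rfl
  have hFB : barycenter F ∉ B := fun h => by
    obtain ⟨H, ⟨hH, hHF⟩, hFH⟩ := mem_iUnion₂.1 h
    exact hHF ((support_barycenter_subset_iff hF hH).1 hFH).symm
  have hGA : barycenter G ∉ A := fun h => hGF ((support_barycenter_subset_iff hG hF).1 h)
  have hGB : barycenter G ∈ B := mem_biUnion ⟨hG, hGF⟩ ((support_barycenter_subset_iff hG hG).2 rfl)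
  obtain ⟨p, ⟨hpX, hpP⟩, hpAB⟩ := isPreconnected_closed_iff.1 (hconn P hPfin) A B hA hB hcover
    ⟨_, ⟨barycenter_mem_geomRealization hF.1, fun h => hFB h.2.2⟩, hFA⟩
    ⟨_, ⟨barycenter_mem_geomRealization hG.1, fun h => hGA h.2.1⟩, hGB⟩
  exact hpP ⟨hpX, hpAB⟩

theorem star_eq_of_connected_general (D : SComplex V) (hD : IsBall 2 D) (W : Set V)
    (hedge : ∀ e ∈ D.faces, e.card = 2 → (∀ v ∈ e, v ∈ W) → e ∈ (boundaryC 2 D).faces)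
    (I : SComplex V) (hI : I = fullSub D (vertexSet D \ W))
    (hconn : IsConnectedC I) :
    (starC D I).faces = D.faces := by
  subst hI
  have hfin := vertexSet_finite_of_isCompact hD.isCompact
  refine Subset.antisymm (fun t ht => ht.1) fun t ht => ?_
  obtain ⟨F, hF, htF⟩ := exists_facet_superset hfin ht
  by_cases hFW : ∀ v ∈ F, v ∈ W
  · have hbd : ∀ e ⊆ F, #e = 2 → e ∈ (boundaryC 2 D).faces := fun e heF he =>
      hedge e (D.down_closed F hF.1 e heF (card_pos.1 (he ▸ two_pos))) he
        fun v hv => hFW v (heF hv)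
    have hF_only := facets_eq_singleton_of_card_inter_le_one hfin
      (fun P hP => hD.isPreconnected_diff le_rfl hP.countable) hF
      fun G hG hGF => card_inter_le_one_of_edges_mem_boundaryC hbd hF hG hGF
    obtain ⟨v, hvD, hvI⟩ := hconn.1
    obtain ⟨G, hG, hvG⟩ := exists_facet_superset hfin hvD
    rw [hF_only, mem_singleton_iff] at hG
    exact absurd (hFW v (hG ▸ hvG (mem_singleton_self v))) (hvI v (mem_singleton_self v)).2
  · push Not at hFW
    obtain ⟨v, hvF, hvW⟩ := hFW
    have hvD : {v} ∈ D.faces :=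
      D.down_closed F hF.1 {v} (singleton_subset_iff.2 hvF) (singleton_nonempty v)
    exact ⟨ht, F, hF.1, htF, v, hvF, hvD, fun u hu => mem_singleton.1 hu ▸ ⟨hvD, hvW⟩⟩

/-- Lemma 2.1: if `W` consists of boundary vertices, every edge joining two vertices of `W`
lies in `∂D`, and the maximal subcomplex `I` on `V \ W` is connected, then `Star_D I = D`. -/
theorem star_eq_of_connected (D : SComplex V) (hD : IsBall 2 D) (W : Set V)
    (hW : ∀ w ∈ W, {w} ∈ (boundaryC 2 D).faces)
    (hedge : ∀ e ∈ D.faces, e.card = 2 → (∀ v ∈ e, v ∈ W) → e ∈ (boundaryC 2 D).faces)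
    (I : SComplex V) (hI : I = fullSub D (vertexSet D \ W))
    (hconn : IsConnectedC I) :
    (starC D I).faces = D.faces :=
  star_eq_of_connected_general D hD W hedge I hI hconn

end SCPaper
end

section
/- Let $D$ be a simplicial 2-ball, $W$ a set of boundary vertices, and $I$ the maximal subcomplex on the complement vertex set $V \setminus W$. If $I_1$ is a connected component of $I$ and $I$ has more than one component, then $\mathrm{Star}_D I_1 \neq D$, and every vertex of $\mathrm{Star}_D I_1 \cap \overline{D \setminus \mathrm{Star}_D I_1}$ belongs to $W$. -/
namespace SCPaper

variable {V : Type} [DecidableEq V]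

theorem SComplex.ext' {V : Type} {K L : SComplex V} (h : K.faces = L.faces) : K = L := by
  cases K; cases L; simpa using h

theorem reach_symm {V : Type} [DecidableEq V] {K : SComplex V} {a b : V}
    (h : Reach K a b) : Reach K b a := by
  induction h with
  | refl => exact Relation.ReflTransGen.refl
  | tail _ hstep ih =>
      exact Relation.ReflTransGen.trans
        (Relation.ReflTransGen.single (by rwa [Finset.pair_comm])) ih

theorem comp_eq {V : Type} [DecidableEq V] {K : SComplex V} {a b : V} (h : Reach K a b) :
    componentOf K a = componentOf K b := by
  apply SComplex.ext'
  ext t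
  simp only [componentOf, Set.mem_setOf_eq]
  constructor
  · rintro ⟨ht, hr⟩
    exact ⟨ht, fun u hu => (reach_symm h).trans (hr u hu)⟩
  · rintro ⟨ht, hr⟩
    exact ⟨ht, fun u hu => h.trans (hr u hu)⟩

/-- If `I` has more than one component and `I₁` is one of them, then `Star_D I₁ ≠ D` and every
vertex of `Star_D I₁ ∩ closure (D \ Star_D I₁)` lies in `W`. -/
theorem star_component_proper (D : SComplex V) (hD : IsBall 2 D) (W : Set V)
    (hW : ∀ w ∈ W, {w} ∈ (boundaryC 2 D).faces)
    (I : SComplex V) (hI : I = fullSub D (vertexSet D \ W))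
    (I₁ : SComplex V) (hI₁ : IsComponentOf I I₁)
    (hmulti : ∃ C₁ C₂, IsComponentOf I C₁ ∧ IsComponentOf I C₂ ∧ C₁ ≠ C₂) :
    (starC D I₁).faces ≠ D.faces ∧
    ∀ v, {v} ∈ (interC (starC D I₁) (compClosure D (starC D I₁))).faces → v ∈ W := by
  subst hI
  set I : SComplex V := fullSub D (vertexSet D \ W) with hIdef
  -- basic facts about vertices of I
  have hIvert : ∀ {a : V}, {a} ∈ I.faces → {a} ∈ D.faces ∧ a ∉ W := by
    intro a ha
    obtain ⟨haD, hall⟩ := ha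
    exact ⟨haD, (hall a (Finset.mem_singleton_self a)).2⟩
  have hedge : ∀ {a b : V} {s : Finset V}, {a} ∈ I.faces → {b} ∈ I.faces →
      s ∈ D.faces → a ∈ s → b ∈ s → ({a, b} : Finset V) ∈ I.faces := by
    intro a b s ha hb hs has hbs
    refine ⟨D.down_closed s hs _ ?_ ⟨a, Finset.mem_insert_self a {b}⟩, ?_⟩
    · intro x hx
      rcases Finset.mem_insert.1 hx with rfl | hx
      · exact has
      · rw [Finset.mem_singleton.1 hx]; exact hbs
    · intro x hx
      rcases Finset.mem_insert.1 hx with rfl | hx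
      · exact ha.2 x (Finset.mem_singleton_self x)
      · rw [Finset.mem_singleton.1 hx]; exact hb.2 b (Finset.mem_singleton_self b)
  obtain ⟨v₀, hv₀, rfl⟩ := hI₁
  -- find a vertex w of I not reachable from v₀
  obtain ⟨C₁, C₂, ⟨u₁, hu₁, rfl⟩, ⟨u₂, hu₂, rfl⟩, hne⟩ := hmulti
  have hnr : ¬ Reach I u₁ u₂ := fun h => hne (comp_eq h)
  obtain ⟨w, hw, hwr⟩ : ∃ w, {w} ∈ I.faces ∧ ¬ Reach I v₀ w := by
    by_cases h1 : Reach I v₀ u₁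
    · exact ⟨u₂, hu₂, fun h2 => hnr ((reach_symm h1).trans h2)⟩
    · exact ⟨u₁, hu₁, h1⟩
  -- membership in the component gives reachability
  have hcomp : ∀ {x : V}, {x} ∈ (componentOf I v₀).faces → {x} ∈ I.faces ∧ Reach I v₀ x := by
    intro x hx
    exact ⟨hx.1, hx.2 x (Finset.mem_singleton_self x)⟩
  constructor
  · -- Star ≠ D
    intro heq
    have hwD : {w} ∈ D.faces := (hIvert hw).1
    have hwstar : {w} ∈ (starC D (componentOf I v₀)).faces := heq ▸ hwD
    obtain ⟨-, s, hs, hws, x, hxs, hxI₁⟩ := hwstar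
    obtain ⟨hxI, hreach⟩ := hcomp hxI₁
    have : Reach I v₀ w :=
      hreach.trans (Relation.ReflTransGen.single
        (hedge hxI hw hs hxs (Finset.singleton_subset_iff.1 hws)))
    exact hwr this
  · -- vertices of the intersection lie in W
    intro v hv
    by_contra hvW
    obtain ⟨⟨hvD, s, hs, hvs, x, hxs, hxI₁⟩, -, s', hs', hs'star, hvs'⟩ := hv
    obtain ⟨hxI, hreach⟩ := hcomp hxI₁
    have hvI : {v} ∈ I.faces := by
      refine ⟨hvD, ?_⟩
      intro u hu
      rw [Finset.mem_singleton.1 hu]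
      exact ⟨hvD, hvW⟩
    have hvreach : Reach I v₀ v :=
      hreach.trans (Relation.ReflTransGen.single
        (hedge hxI hvI hs hxs (Finset.singleton_subset_iff.1 hvs)))
    have hvI₁ : {v} ∈ (componentOf I v₀).faces := by
      refine ⟨hvI, ?_⟩
      intro u hu
      rw [Finset.mem_singleton.1 hu]
      exact hvreach
    exact hs'star ⟨hs', s', hs', subset_rfl, v, Finset.singleton_subset_iff.1 hvs', hvI₁⟩
end SCPaper
end

section
/- The simplicial 3-ball of Example 3.2 (the triangulated trigonal pillar with attached rings, given by the explicit list of 36 tetrahedra on vertices 1–14) is shellable, and hence constructible. -/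
namespace SCPaper

variable {V : Type} [DecidableEq V]

/-- The 36 facets of the 3-ball of Example 3.2. -/
def exFacets : List (Finset ℕ) :=
  [{1,2,6,7}, {1,2,7,8}, {1,2,6,8}, {1,3,5,8}, {1,3,6,8}, {1,3,4,6}, {1,4,6,7}, {1,4,5,7},
   {1,5,7,8}, {5,8,9,11}, {3,5,8,9}, {3,6,8,9}, {3,6,9,10}, {3,4,6,10}, {4,6,7,10},
   {4,7,10,11}, {4,5,7,11}, {5,7,8,11}, {3,4,10,13}, {3,10,12,13}, {3,9,10,12}, {3,5,9,12},
   {5,9,12,14}, {5,9,11,14}, {4,5,11,14}, {4,11,13,14}, {4,10,11,13}, {6,7,10,13},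
   {6,10,12,13}, {6,9,10,12}, {6,8,9,12}, {8,9,12,14}, {8,9,11,14}, {7,8,11,14},
   {7,11,13,14}, {7,10,11,13}]

/-- The simplicial 3-ball of Example 3.2. -/
def exComplex : SComplex ℕ where
  faces := {t | t.Nonempty ∧ ∃ s ∈ exFacets, t ⊆ s}
  nonempty_mem := fun s hs => hs.1
  down_closed := by
    rintro s ⟨-, u, hu, hsu⟩ t ht hne
    exact ⟨hne, u, hu, ht.trans hsu⟩
def genC (L : List (Finset ℕ)) : SComplex ℕ where
  faces := {t | t.Nonempty ∧ ∃ s ∈ L, t ⊆ s}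
  nonempty_mem := fun s hs => hs.1
  down_closed := by
    rintro s ⟨-, u, hu, hsu⟩ t ht hne
    exact ⟨hne, u, hu, ht.trans hsu⟩

lemma SComplex.ext'_s14 {K K' : SComplex ℕ} (h : K.faces = K'.faces) : K = K' := by
  cases K; cases K'; simp_all

lemma mem_genC {L : List (Finset ℕ)} {s : Finset ℕ} :
    s ∈ (genC L).faces ↔ s.Nonempty ∧ ∃ u ∈ L, s ⊆ u := Iff.rfl

lemma genC_subset {L1 L2 : List (Finset ℕ)}
    (h : ∀ u ∈ L1, u.Nonempty → ∃ v ∈ L2, u ⊆ v) :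
    (genC L1).faces ⊆ (genC L2).faces := by
  rintro s ⟨hne, u, hu, hsu⟩
  obtain ⟨v, hv, huv⟩ := h u hu (hne.mono hsu)
  exact ⟨hne, v, hv, hsu.trans huv⟩

lemma genC_eq {L1 L2 : List (Finset ℕ)}
    (h1 : ∀ u ∈ L1, u.Nonempty → ∃ v ∈ L2, u ⊆ v)
    (h2 : ∀ v ∈ L2, v.Nonempty → ∃ u ∈ L1, v ⊆ u) : genC L1 = genC L2 :=
  SComplex.ext'_s14 (Set.Subset.antisymm (genC_subset h1) (genC_subset h2))

lemma genC_split (L1 L2 L : List (Finset ℕ)) (h : L = L1 ++ L2) :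
    (genC L).faces = (genC L1).faces ∪ (genC L2).faces := by
  subst h; ext s
  simp only [mem_genC, Set.mem_union, List.mem_append]
  constructor
  · rintro ⟨hne, u, (hu | hu), hsu⟩
    · exact Or.inl ⟨hne, u, hu, hsu⟩
    · exact Or.inr ⟨hne, u, hu, hsu⟩
  · rintro (⟨hne, u, hu, hsu⟩ | ⟨hne, u, hu, hsu⟩)
    · exact ⟨hne, u, Or.inl hu, hsu⟩
    · exact ⟨hne, u, Or.inr hu, hsu⟩

lemma interC_genC (L1 L2 : List (Finset ℕ)) :
    interC (genC L1) (genC L2) = genC (L1.flatMap fun u => L2.map fun v => u ∩ v) := by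
  apply SComplex.ext'_s14
  ext s
  simp only [interC, Set.mem_inter_iff, mem_genC, List.mem_flatMap, List.mem_map]
  constructor
  · rintro ⟨⟨hne, u, hu, hsu⟩, ⟨-, v, hv, hsv⟩⟩
    exact ⟨hne, u ∩ v, ⟨u, hu, v, hv, rfl⟩, Finset.subset_inter hsu hsv⟩
  · rintro ⟨hne, w, ⟨u, hu, v, hv, rfl⟩, hsw⟩
    exact ⟨⟨hne, u, hu, hsw.trans Finset.inter_subset_left⟩,
           ⟨hne, v, hv, hsw.trans Finset.inter_subset_right⟩⟩

lemma isPure_genC (d : ℕ) (L : List (Finset ℕ)) (h : ∀ u ∈ L, u.card = d + 1) :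
    IsPure d (genC L) := by
  constructor
  · rintro s ⟨hne, u, hu, hsu⟩
    exact (Finset.card_le_card hsu).trans (h u hu).le
  · rintro s ⟨hne, u, hu, hsu⟩
    refine ⟨u, ⟨Finset.card_pos.mp (by rw [h u hu]; omega), u, hu, subset_rfl⟩, hsu, h u hu⟩

lemma hasDim_genC (n : ℕ) (L : List (Finset ℕ)) (hle : ∀ u ∈ L, u.card ≤ n + 1)
    (hex : ∃ u ∈ L, u.card = n + 1) : HasDim n (genC L) := by
  obtain ⟨u, hu, hc⟩ := hex
  refine ⟨?_, u, ⟨Finset.card_pos.mp (by rw [hc]; omega), u, hu, subset_rfl⟩, hc⟩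
  rintro s ⟨hne, v, hv, hsv⟩
  exact (Finset.card_le_card hsv).trans (hle v hv)

lemma constr_simplex (d : ℕ) (s : Finset ℕ) (h : s.card = d + 1) :
    Constructible d (genC [s]) := by
  refine Constructible.simplex d _ s h ?_
  ext t
  simp only [mem_genC, List.mem_singleton, Set.mem_setOf_eq]
  constructor
  · rintro ⟨hne, u, rfl, hsu⟩; exact ⟨hsu, hne⟩
  · rintro ⟨hts, hne⟩; exact ⟨hne, s, rfl, hts⟩

lemma constr_two (d : ℕ) (a b : Finset ℕ) (ha : a.card = d + 2) (hb : b.card = d + 2)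
    (hab : (a ∩ b).card = d + 1) : Constructible (d + 1) (genC [a, b]) := by
  have hi : interC (genC [a]) (genC [b]) = genC [a ∩ b] := by
    rw [interC_genC]; rfl
  refine Constructible.union (d + 1) _ (genC [a]) (genC [b])
    (genC_subset ?_) (genC_subset ?_)
    (isPure_genC _ _ ?_) (isPure_genC _ _ ?_)
    (genC_split [a] [b] _ rfl) ?_
    (constr_simplex _ a ha) (constr_simplex _ b hb) ?_
  · rintro u hu -; exact ⟨u, by simp at hu; simp [hu], subset_rfl⟩
  · rintro u hu -; exact ⟨u, by simp at hu; simp [hu], subset_rfl⟩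
  · intro u hu; simp at hu; simp [hu, ha]
  · intro u hu; simp at hu; simp [hu, hb]
  · rw [hi]; exact hasDim_genC d [a ∩ b] (by simp [hab]) ⟨a ∩ b, by simp, hab⟩
  · rw [hi]; exact constr_simplex d (a ∩ b) hab

lemma constr_three (a b c : Finset ℕ) (ha : a.card = 3) (hb : b.card = 3) (hc : c.card = 3)
    (hab : (a ∩ b).card = 2) (hac : (a ∩ c).card = 2) (hbc : (b ∩ c).card = 2)
    (habc : ((a ∩ c) ∩ (b ∩ c)).card = 1) : Constructible 2 (genC [a, b, c]) := by
  have hi : interC (genC [a, b]) (genC [c]) = genC [a ∩ c, b ∩ c] := by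
    rw [interC_genC]; rfl
  refine Constructible.union 2 _ (genC [a, b]) (genC [c])
    (genC_subset ?_) (genC_subset ?_)
    (isPure_genC _ _ ?_) (isPure_genC _ _ ?_)
    (genC_split [a, b] [c] _ rfl) ?_
    (constr_two 1 a b ha hb hab) (constr_simplex _ c hc) ?_
  · intro u hu _; exact ⟨u, by simp at hu; rcases hu with h | h <;> simp [h], subset_rfl⟩
  · intro u hu _; exact ⟨u, by simp at hu; simp [hu], subset_rfl⟩
  · intro u hu; simp at hu; rcases hu with h | h <;> simp [h, ha, hb]
  · intro u hu; simp at hu; simp [hu, hc]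
  · rw [hi]
    exact hasDim_genC 1 _ (by simp [hac, hbc]) ⟨a ∩ c, by simp, hac⟩
  · rw [hi]; exact constr_two 0 (a ∩ c) (b ∩ c) hac hbc habc

lemma constr_step (d : ℕ) (L Ts : List (Finset ℕ)) (F : Finset ℕ)
    (hF : F.card = d + 1)
    (hcards : ∀ u ∈ L, u.card = d + 1)
    (hTs : interC (genC L) (genC [F]) = genC Ts)
    (hdim : HasDim (d - 1) (genC Ts))
    (hc1 : Constructible d (genC L))
    (hci : Constructible (d - 1) (genC Ts)) :
    Constructible d (genC (L ++ [F])) := by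
  refine Constructible.union d _ (genC L) (genC [F])
    (genC_subset ?_) (genC_subset ?_)
    (isPure_genC _ _ hcards) (isPure_genC _ _ (by simp [hF]))
    (genC_split L [F] _ rfl) (hTs ▸ hdim) hc1 (constr_simplex d F hF) (hTs ▸ hci)
  · intro u hu _; exact ⟨u, List.mem_append_left _ hu, subset_rfl⟩
  · intro u hu _; exact ⟨u, List.mem_append_right _ hu, subset_rfl⟩



def shellList : List (Finset ℕ) :=
  [{7,11,13,14}, {7,8,11,14}, {5,7,8,11}, {5,8,9,11}, {3,5,8,9}, {3,6,8,9}, {6,8,9,12}, {8,9,11,14}, {5,9,11,14}, {7,10,11,13}, {4,10,11,13}, {1,3,5,8}, {4,11,13,14}, {4,7,10,11}, {4,5,11,14}, {8,9,12,14}, {5,9,12,14}, {3,5,9,12}, {4,5,7,11}, {1,3,6,8}, {1,2,6,8}, {1,5,7,8}, {1,2,7,8}, {1,2,6,7}, {1,4,5,7}, {1,4,6,7}, {1,3,4,6}, {4,6,7,10}, {6,7,10,13}, {3,4,6,10}, {3,4,10,13}, {3,6,9,10}, {6,9,10,12}, {6,10,12,13}, {3,9,10,12}, {3,10,12,13}]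

def shellF (i : Fin 36) : Finset ℕ := shellList.getD i.val ∅

set_option maxRecDepth 10000 in
set_option maxHeartbeats 2000000 in
lemma shellF_inj : Function.Injective shellF := by decide

set_option maxRecDepth 100000 in
set_option maxHeartbeats 4000000 in
lemma shell_cond : ∀ k : Fin 36, 0 < k.val →
    (∃ s ∈ (shellF k).powerset, s.Nonempty ∧ ∃ j : Fin 36, j < k ∧ s ⊆ shellF j) ∧
    ∀ s ∈ (shellF k).powerset, (s.Nonempty ∧ ∃ j : Fin 36, j < k ∧ s ⊆ shellF j) →
      ∃ u ∈ (shellF k).powerset, s ⊆ u ∧ u.card = 3 ∧ ∃ j : Fin 36, j < k ∧ u ⊆ shellF j := by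
  decide

set_option maxRecDepth 10000 in
lemma shellF_mem : ∀ i : Fin 36, (shellF i).Nonempty ∧ (∃ s ∈ exFacets, shellF i ⊆ s) ∧ (shellF i).card = 4 := by
  decide

set_option maxRecDepth 10000 in
lemma exFacets_to_shellF : ∀ u ∈ exFacets, ∃ i : Fin 36, u ⊆ shellF i := by decide

set_option maxRecDepth 10000 in
lemma shellF_to_exFacets : ∀ i : Fin 36, ∃ u ∈ exFacets, shellF i ⊆ u := by decide


set_option maxRecDepth 10000 in
set_option maxHeartbeats 1000000 in
lemma constr_main : Constructible 3 (genC shellList) := by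
  have h0 : Constructible 3 (genC [{7,11,13,14}]) := constr_simplex 3 _ (by decide)
  have h1 : Constructible 3 (genC [{7,11,13,14}, {7,8,11,14}]) :=
    constr_step 3 [{7,11,13,14}] [{7,11,14}] {7,8,11,14} (by decide) (by decide)
      (by rw [interC_genC]; exact genC_eq (by decide) (by decide))
      (hasDim_genC 2 _ (by decide) (by decide)) h0 (constr_simplex 2 {7,11,14} (by decide))
  have h2 : Constructible 3 (genC [{7,11,13,14}, {7,8,11,14}, {5,7,8,11}]) :=
    constr_step 3 [{7,11,13,14}, {7,8,11,14}] [{7,8,11}] {5,7,8,11} (by decide) (by decide)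
      (by rw [interC_genC]; exact genC_eq (by decide) (by decide))
      (hasDim_genC 2 _ (by decide) (by decide)) h1 (constr_simplex 2 {7,8,11} (by decide))
  have h3 : Constructible 3 (genC [{7,11,13,14}, {7,8,11,14}, {5,7,8,11}, {5,8,9,11}]) :=
    constr_step 3 [{7,11,13,14}, {7,8,11,14}, {5,7,8,11}] [{5,8,11}] {5,8,9,11} (by decide) (by decide)
      (by rw [interC_genC]; exact genC_eq (by decide) (by decide))
      (hasDim_genC 2 _ (by decide) (by decide)) h2 (constr_simplex 2 {5,8,11} (by decide))
  have h4 : Constructible 3 (genC [{7,11,13,14}, {7,8,11,14}, {5,7,8,11}, {5,8,9,11}, {3,5,8,9}]) :=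
    constr_step 3 [{7,11,13,14}, {7,8,11,14}, {5,7,8,11}, {5,8,9,11}] [{5,8,9}] {3,5,8,9} (by decide) (by decide)
      (by rw [interC_genC]; exact genC_eq (by decide) (by decide))
      (hasDim_genC 2 _ (by decide) (by decide)) h3 (constr_simplex 2 {5,8,9} (by decide))
  have h5 : Constructible 3 (genC [{7,11,13,14}, {7,8,11,14}, {5,7,8,11}, {5,8,9,11}, {3,5,8,9}, {3,6,8,9}]) :=
    constr_step 3 [{7,11,13,14}, {7,8,11,14}, {5,7,8,11}, {5,8,9,11}, {3,5,8,9}] [{3,8,9}] {3,6,8,9} (by decide) (by decide)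
      (by rw [interC_genC]; exact genC_eq (by decide) (by decide))
      (hasDim_genC 2 _ (by decide) (by decide)) h4 (constr_simplex 2 {3,8,9} (by decide))
  have h6 : Constructible 3 (genC [{7,11,13,14}, {7,8,11,14}, {5,7,8,11}, {5,8,9,11}, {3,5,8,9}, {3,6,8,9}, {6,8,9,12}]) :=
    constr_step 3 [{7,11,13,14}, {7,8,11,14}, {5,7,8,11}, {5,8,9,11}, {3,5,8,9}, {3,6,8,9}] [{6,8,9}] {6,8,9,12} (by decide) (by decide)
      (by rw [interC_genC]; exact genC_eq (by decide) (by decide))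
      (hasDim_genC 2 _ (by decide) (by decide)) h5 (constr_simplex 2 {6,8,9} (by decide))
  have h7 : Constructible 3 (genC [{7,11,13,14}, {7,8,11,14}, {5,7,8,11}, {5,8,9,11}, {3,5,8,9}, {3,6,8,9}, {6,8,9,12}, {8,9,11,14}]) :=
    constr_step 3 [{7,11,13,14}, {7,8,11,14}, {5,7,8,11}, {5,8,9,11}, {3,5,8,9}, {3,6,8,9}, {6,8,9,12}] [{8,9,11}, {8,11,14}] {8,9,11,14} (by decide) (by decide)
      (by rw [interC_genC]; exact genC_eq (by decide) (by decide))
      (hasDim_genC 2 _ (by decide) (by decide)) h6 (constr_two 1 {8,9,11} {8,11,14} (by decide) (by decide) (by decide))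
  have h8 : Constructible 3 (genC [{7,11,13,14}, {7,8,11,14}, {5,7,8,11}, {5,8,9,11}, {3,5,8,9}, {3,6,8,9}, {6,8,9,12}, {8,9,11,14}, {5,9,11,14}]) :=
    constr_step 3 [{7,11,13,14}, {7,8,11,14}, {5,7,8,11}, {5,8,9,11}, {3,5,8,9}, {3,6,8,9}, {6,8,9,12}, {8,9,11,14}] [{5,9,11}, {9,11,14}] {5,9,11,14} (by decide) (by decide)
      (by rw [interC_genC]; exact genC_eq (by decide) (by decide))
      (hasDim_genC 2 _ (by decide) (by decide)) h7 (constr_two 1 {5,9,11} {9,11,14} (by decide) (by decide) (by decide))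
  have h9 : Constructible 3 (genC [{7,11,13,14}, {7,8,11,14}, {5,7,8,11}, {5,8,9,11}, {3,5,8,9}, {3,6,8,9}, {6,8,9,12}, {8,9,11,14}, {5,9,11,14}, {7,10,11,13}]) :=
    constr_step 3 [{7,11,13,14}, {7,8,11,14}, {5,7,8,11}, {5,8,9,11}, {3,5,8,9}, {3,6,8,9}, {6,8,9,12}, {8,9,11,14}, {5,9,11,14}] [{7,11,13}] {7,10,11,13} (by decide) (by decide)
      (by rw [interC_genC]; exact genC_eq (by decide) (by decide))
      (hasDim_genC 2 _ (by decide) (by decide)) h8 (constr_simplex 2 {7,11,13} (by decide))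
  have h10 : Constructible 3 (genC [{7,11,13,14}, {7,8,11,14}, {5,7,8,11}, {5,8,9,11}, {3,5,8,9}, {3,6,8,9}, {6,8,9,12}, {8,9,11,14}, {5,9,11,14}, {7,10,11,13}, {4,10,11,13}]) :=
    constr_step 3 [{7,11,13,14}, {7,8,11,14}, {5,7,8,11}, {5,8,9,11}, {3,5,8,9}, {3,6,8,9}, {6,8,9,12}, {8,9,11,14}, {5,9,11,14}, {7,10,11,13}] [{10,11,13}] {4,10,11,13} (by decide) (by decide)
      (by rw [interC_genC]; exact genC_eq (by decide) (by decide))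
      (hasDim_genC 2 _ (by decide) (by decide)) h9 (constr_simplex 2 {10,11,13} (by decide))
  have h11 : Constructible 3 (genC [{7,11,13,14}, {7,8,11,14}, {5,7,8,11}, {5,8,9,11}, {3,5,8,9}, {3,6,8,9}, {6,8,9,12}, {8,9,11,14}, {5,9,11,14}, {7,10,11,13}, {4,10,11,13}, {1,3,5,8}]) :=
    constr_step 3 [{7,11,13,14}, {7,8,11,14}, {5,7,8,11}, {5,8,9,11}, {3,5,8,9}, {3,6,8,9}, {6,8,9,12}, {8,9,11,14}, {5,9,11,14}, {7,10,11,13}, {4,10,11,13}] [{3,5,8}] {1,3,5,8} (by decide) (by decide)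
      (by rw [interC_genC]; exact genC_eq (by decide) (by decide))
      (hasDim_genC 2 _ (by decide) (by decide)) h10 (constr_simplex 2 {3,5,8} (by decide))
  have h12 : Constructible 3 (genC [{7,11,13,14}, {7,8,11,14}, {5,7,8,11}, {5,8,9,11}, {3,5,8,9}, {3,6,8,9}, {6,8,9,12}, {8,9,11,14}, {5,9,11,14}, {7,10,11,13}, {4,10,11,13}, {1,3,5,8}, {4,11,13,14}]) :=
    constr_step 3 [{7,11,13,14}, {7,8,11,14}, {5,7,8,11}, {5,8,9,11}, {3,5,8,9}, {3,6,8,9}, {6,8,9,12}, {8,9,11,14}, {5,9,11,14}, {7,10,11,13}, {4,10,11,13}, {1,3,5,8}] [{4,11,13}, {11,13,14}] {4,11,13,14} (by decide) (by decide)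
      (by rw [interC_genC]; exact genC_eq (by decide) (by decide))
      (hasDim_genC 2 _ (by decide) (by decide)) h11 (constr_two 1 {4,11,13} {11,13,14} (by decide) (by decide) (by decide))
  have h13 : Constructible 3 (genC [{7,11,13,14}, {7,8,11,14}, {5,7,8,11}, {5,8,9,11}, {3,5,8,9}, {3,6,8,9}, {6,8,9,12}, {8,9,11,14}, {5,9,11,14}, {7,10,11,13}, {4,10,11,13}, {1,3,5,8}, {4,11,13,14}, {4,7,10,11}]) :=
    constr_step 3 [{7,11,13,14}, {7,8,11,14}, {5,7,8,11}, {5,8,9,11}, {3,5,8,9}, {3,6,8,9}, {6,8,9,12}, {8,9,11,14}, {5,9,11,14}, {7,10,11,13}, {4,10,11,13}, {1,3,5,8}, {4,11,13,14}] [{4,10,11}, {7,10,11}] {4,7,10,11} (by decide) (by decide)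
      (by rw [interC_genC]; exact genC_eq (by decide) (by decide))
      (hasDim_genC 2 _ (by decide) (by decide)) h12 (constr_two 1 {4,10,11} {7,10,11} (by decide) (by decide) (by decide))
  have h14 : Constructible 3 (genC [{7,11,13,14}, {7,8,11,14}, {5,7,8,11}, {5,8,9,11}, {3,5,8,9}, {3,6,8,9}, {6,8,9,12}, {8,9,11,14}, {5,9,11,14}, {7,10,11,13}, {4,10,11,13}, {1,3,5,8}, {4,11,13,14}, {4,7,10,11}, {4,5,11,14}]) :=
    constr_step 3 [{7,11,13,14}, {7,8,11,14}, {5,7,8,11}, {5,8,9,11}, {3,5,8,9}, {3,6,8,9}, {6,8,9,12}, {8,9,11,14}, {5,9,11,14}, {7,10,11,13}, {4,10,11,13}, {1,3,5,8}, {4,11,13,14}, {4,7,10,11}] [{4,11,14}, {5,11,14}] {4,5,11,14} (by decide) (by decide)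
      (by rw [interC_genC]; exact genC_eq (by decide) (by decide))
      (hasDim_genC 2 _ (by decide) (by decide)) h13 (constr_two 1 {4,11,14} {5,11,14} (by decide) (by decide) (by decide))
  have h15 : Constructible 3 (genC [{7,11,13,14}, {7,8,11,14}, {5,7,8,11}, {5,8,9,11}, {3,5,8,9}, {3,6,8,9}, {6,8,9,12}, {8,9,11,14}, {5,9,11,14}, {7,10,11,13}, {4,10,11,13}, {1,3,5,8}, {4,11,13,14}, {4,7,10,11}, {4,5,11,14}, {8,9,12,14}]) :=
    constr_step 3 [{7,11,13,14}, {7,8,11,14}, {5,7,8,11}, {5,8,9,11}, {3,5,8,9}, {3,6,8,9}, {6,8,9,12}, {8,9,11,14}, {5,9,11,14}, {7,10,11,13}, {4,10,11,13}, {1,3,5,8}, {4,11,13,14}, {4,7,10,11}, {4,5,11,14}] [{8,9,12}, {8,9,14}] {8,9,12,14} (by decide) (by decide)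
      (by rw [interC_genC]; exact genC_eq (by decide) (by decide))
      (hasDim_genC 2 _ (by decide) (by decide)) h14 (constr_two 1 {8,9,12} {8,9,14} (by decide) (by decide) (by decide))
  have h16 : Constructible 3 (genC [{7,11,13,14}, {7,8,11,14}, {5,7,8,11}, {5,8,9,11}, {3,5,8,9}, {3,6,8,9}, {6,8,9,12}, {8,9,11,14}, {5,9,11,14}, {7,10,11,13}, {4,10,11,13}, {1,3,5,8}, {4,11,13,14}, {4,7,10,11}, {4,5,11,14}, {8,9,12,14}, {5,9,12,14}]) :=
    constr_step 3 [{7,11,13,14}, {7,8,11,14}, {5,7,8,11}, {5,8,9,11}, {3,5,8,9}, {3,6,8,9}, {6,8,9,12}, {8,9,11,14}, {5,9,11,14}, {7,10,11,13}, {4,10,11,13}, {1,3,5,8}, {4,11,13,14}, {4,7,10,11}, {4,5,11,14}, {8,9,12,14}] [{5,9,14}, {9,12,14}] {5,9,12,14} (by decide) (by decide)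
      (by rw [interC_genC]; exact genC_eq (by decide) (by decide))
      (hasDim_genC 2 _ (by decide) (by decide)) h15 (constr_two 1 {5,9,14} {9,12,14} (by decide) (by decide) (by decide))
  have h17 : Constructible 3 (genC [{7,11,13,14}, {7,8,11,14}, {5,7,8,11}, {5,8,9,11}, {3,5,8,9}, {3,6,8,9}, {6,8,9,12}, {8,9,11,14}, {5,9,11,14}, {7,10,11,13}, {4,10,11,13}, {1,3,5,8}, {4,11,13,14}, {4,7,10,11}, {4,5,11,14}, {8,9,12,14}, {5,9,12,14}, {3,5,9,12}]) :=
    constr_step 3 [{7,11,13,14}, {7,8,11,14}, {5,7,8,11}, {5,8,9,11}, {3,5,8,9}, {3,6,8,9}, {6,8,9,12}, {8,9,11,14}, {5,9,11,14}, {7,10,11,13}, {4,10,11,13}, {1,3,5,8}, {4,11,13,14}, {4,7,10,11}, {4,5,11,14}, {8,9,12,14}, {5,9,12,14}] [{3,5,9}, {5,9,12}] {3,5,9,12} (by decide) (by decide)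
      (by rw [interC_genC]; exact genC_eq (by decide) (by decide))
      (hasDim_genC 2 _ (by decide) (by decide)) h16 (constr_two 1 {3,5,9} {5,9,12} (by decide) (by decide) (by decide))
  have h18 : Constructible 3 (genC [{7,11,13,14}, {7,8,11,14}, {5,7,8,11}, {5,8,9,11}, {3,5,8,9}, {3,6,8,9}, {6,8,9,12}, {8,9,11,14}, {5,9,11,14}, {7,10,11,13}, {4,10,11,13}, {1,3,5,8}, {4,11,13,14}, {4,7,10,11}, {4,5,11,14}, {8,9,12,14}, {5,9,12,14}, {3,5,9,12}, {4,5,7,11}]) :=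
    constr_step 3 [{7,11,13,14}, {7,8,11,14}, {5,7,8,11}, {5,8,9,11}, {3,5,8,9}, {3,6,8,9}, {6,8,9,12}, {8,9,11,14}, {5,9,11,14}, {7,10,11,13}, {4,10,11,13}, {1,3,5,8}, {4,11,13,14}, {4,7,10,11}, {4,5,11,14}, {8,9,12,14}, {5,9,12,14}, {3,5,9,12}] [{4,5,11}, {4,7,11}, {5,7,11}] {4,5,7,11} (by decide) (by decide)
      (by rw [interC_genC]; exact genC_eq (by decide) (by decide))
      (hasDim_genC 2 _ (by decide) (by decide)) h17 (constr_three {4,5,11} {4,7,11} {5,7,11} (by decide) (by decide) (by decide) (by decide) (by decide) (by decide) (by decide))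
  have h19 : Constructible 3 (genC [{7,11,13,14}, {7,8,11,14}, {5,7,8,11}, {5,8,9,11}, {3,5,8,9}, {3,6,8,9}, {6,8,9,12}, {8,9,11,14}, {5,9,11,14}, {7,10,11,13}, {4,10,11,13}, {1,3,5,8}, {4,11,13,14}, {4,7,10,11}, {4,5,11,14}, {8,9,12,14}, {5,9,12,14}, {3,5,9,12}, {4,5,7,11}, {1,3,6,8}]) :=
    constr_step 3 [{7,11,13,14}, {7,8,11,14}, {5,7,8,11}, {5,8,9,11}, {3,5,8,9}, {3,6,8,9}, {6,8,9,12}, {8,9,11,14}, {5,9,11,14}, {7,10,11,13}, {4,10,11,13}, {1,3,5,8}, {4,11,13,14}, {4,7,10,11}, {4,5,11,14}, {8,9,12,14}, {5,9,12,14}, {3,5,9,12}, {4,5,7,11}] [{1,3,8}, {3,6,8}] {1,3,6,8} (by decide) (by decide)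
      (by rw [interC_genC]; exact genC_eq (by decide) (by decide))
      (hasDim_genC 2 _ (by decide) (by decide)) h18 (constr_two 1 {1,3,8} {3,6,8} (by decide) (by decide) (by decide))
  have h20 : Constructible 3 (genC [{7,11,13,14}, {7,8,11,14}, {5,7,8,11}, {5,8,9,11}, {3,5,8,9}, {3,6,8,9}, {6,8,9,12}, {8,9,11,14}, {5,9,11,14}, {7,10,11,13}, {4,10,11,13}, {1,3,5,8}, {4,11,13,14}, {4,7,10,11}, {4,5,11,14}, {8,9,12,14}, {5,9,12,14}, {3,5,9,12}, {4,5,7,11}, {1,3,6,8}, {1,2,6,8}]) :=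
    constr_step 3 [{7,11,13,14}, {7,8,11,14}, {5,7,8,11}, {5,8,9,11}, {3,5,8,9}, {3,6,8,9}, {6,8,9,12}, {8,9,11,14}, {5,9,11,14}, {7,10,11,13}, {4,10,11,13}, {1,3,5,8}, {4,11,13,14}, {4,7,10,11}, {4,5,11,14}, {8,9,12,14}, {5,9,12,14}, {3,5,9,12}, {4,5,7,11}, {1,3,6,8}] [{1,6,8}] {1,2,6,8} (by decide) (by decide)
      (by rw [interC_genC]; exact genC_eq (by decide) (by decide))
      (hasDim_genC 2 _ (by decide) (by decide)) h19 (constr_simplex 2 {1,6,8} (by decide))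
  have h21 : Constructible 3 (genC [{7,11,13,14}, {7,8,11,14}, {5,7,8,11}, {5,8,9,11}, {3,5,8,9}, {3,6,8,9}, {6,8,9,12}, {8,9,11,14}, {5,9,11,14}, {7,10,11,13}, {4,10,11,13}, {1,3,5,8}, {4,11,13,14}, {4,7,10,11}, {4,5,11,14}, {8,9,12,14}, {5,9,12,14}, {3,5,9,12}, {4,5,7,11}, {1,3,6,8}, {1,2,6,8}, {1,5,7,8}]) :=
    constr_step 3 [{7,11,13,14}, {7,8,11,14}, {5,7,8,11}, {5,8,9,11}, {3,5,8,9}, {3,6,8,9}, {6,8,9,12}, {8,9,11,14}, {5,9,11,14}, {7,10,11,13}, {4,10,11,13}, {1,3,5,8}, {4,11,13,14}, {4,7,10,11}, {4,5,11,14}, {8,9,12,14}, {5,9,12,14}, {3,5,9,12}, {4,5,7,11}, {1,3,6,8}, {1,2,6,8}] [{1,5,8}, {5,7,8}] {1,5,7,8} (by decide) (by decide)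
      (by rw [interC_genC]; exact genC_eq (by decide) (by decide))
      (hasDim_genC 2 _ (by decide) (by decide)) h20 (constr_two 1 {1,5,8} {5,7,8} (by decide) (by decide) (by decide))
  have h22 : Constructible 3 (genC [{7,11,13,14}, {7,8,11,14}, {5,7,8,11}, {5,8,9,11}, {3,5,8,9}, {3,6,8,9}, {6,8,9,12}, {8,9,11,14}, {5,9,11,14}, {7,10,11,13}, {4,10,11,13}, {1,3,5,8}, {4,11,13,14}, {4,7,10,11}, {4,5,11,14}, {8,9,12,14}, {5,9,12,14}, {3,5,9,12}, {4,5,7,11}, {1,3,6,8}, {1,2,6,8}, {1,5,7,8}, {1,2,7,8}]) :=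
    constr_step 3 [{7,11,13,14}, {7,8,11,14}, {5,7,8,11}, {5,8,9,11}, {3,5,8,9}, {3,6,8,9}, {6,8,9,12}, {8,9,11,14}, {5,9,11,14}, {7,10,11,13}, {4,10,11,13}, {1,3,5,8}, {4,11,13,14}, {4,7,10,11}, {4,5,11,14}, {8,9,12,14}, {5,9,12,14}, {3,5,9,12}, {4,5,7,11}, {1,3,6,8}, {1,2,6,8}, {1,5,7,8}] [{1,2,8}, {1,7,8}] {1,2,7,8} (by decide) (by decide)
      (by rw [interC_genC]; exact genC_eq (by decide) (by decide))
      (hasDim_genC 2 _ (by decide) (by decide)) h21 (constr_two 1 {1,2,8} {1,7,8} (by decide) (by decide) (by decide))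
  have h23 : Constructible 3 (genC [{7,11,13,14}, {7,8,11,14}, {5,7,8,11}, {5,8,9,11}, {3,5,8,9}, {3,6,8,9}, {6,8,9,12}, {8,9,11,14}, {5,9,11,14}, {7,10,11,13}, {4,10,11,13}, {1,3,5,8}, {4,11,13,14}, {4,7,10,11}, {4,5,11,14}, {8,9,12,14}, {5,9,12,14}, {3,5,9,12}, {4,5,7,11}, {1,3,6,8}, {1,2,6,8}, {1,5,7,8}, {1,2,7,8}, {1,2,6,7}]) :=
    constr_step 3 [{7,11,13,14}, {7,8,11,14}, {5,7,8,11}, {5,8,9,11}, {3,5,8,9}, {3,6,8,9}, {6,8,9,12}, {8,9,11,14}, {5,9,11,14}, {7,10,11,13}, {4,10,11,13}, {1,3,5,8}, {4,11,13,14}, {4,7,10,11}, {4,5,11,14}, {8,9,12,14}, {5,9,12,14}, {3,5,9,12}, {4,5,7,11}, {1,3,6,8}, {1,2,6,8}, {1,5,7,8}, {1,2,7,8}] [{1,2,6}, {1,2,7}] {1,2,6,7} (by decide) (by decide)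
      (by rw [interC_genC]; exact genC_eq (by decide) (by decide))
      (hasDim_genC 2 _ (by decide) (by decide)) h22 (constr_two 1 {1,2,6} {1,2,7} (by decide) (by decide) (by decide))
  have h24 : Constructible 3 (genC [{7,11,13,14}, {7,8,11,14}, {5,7,8,11}, {5,8,9,11}, {3,5,8,9}, {3,6,8,9}, {6,8,9,12}, {8,9,11,14}, {5,9,11,14}, {7,10,11,13}, {4,10,11,13}, {1,3,5,8}, {4,11,13,14}, {4,7,10,11}, {4,5,11,14}, {8,9,12,14}, {5,9,12,14}, {3,5,9,12}, {4,5,7,11}, {1,3,6,8}, {1,2,6,8}, {1,5,7,8}, {1,2,7,8}, {1,2,6,7}, {1,4,5,7}]) :=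
    constr_step 3 [{7,11,13,14}, {7,8,11,14}, {5,7,8,11}, {5,8,9,11}, {3,5,8,9}, {3,6,8,9}, {6,8,9,12}, {8,9,11,14}, {5,9,11,14}, {7,10,11,13}, {4,10,11,13}, {1,3,5,8}, {4,11,13,14}, {4,7,10,11}, {4,5,11,14}, {8,9,12,14}, {5,9,12,14}, {3,5,9,12}, {4,5,7,11}, {1,3,6,8}, {1,2,6,8}, {1,5,7,8}, {1,2,7,8}, {1,2,6,7}] [{1,5,7}, {4,5,7}] {1,4,5,7} (by decide) (by decide)
      (by rw [interC_genC]; exact genC_eq (by decide) (by decide))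
      (hasDim_genC 2 _ (by decide) (by decide)) h23 (constr_two 1 {1,5,7} {4,5,7} (by decide) (by decide) (by decide))
  have h25 : Constructible 3 (genC [{7,11,13,14}, {7,8,11,14}, {5,7,8,11}, {5,8,9,11}, {3,5,8,9}, {3,6,8,9}, {6,8,9,12}, {8,9,11,14}, {5,9,11,14}, {7,10,11,13}, {4,10,11,13}, {1,3,5,8}, {4,11,13,14}, {4,7,10,11}, {4,5,11,14}, {8,9,12,14}, {5,9,12,14}, {3,5,9,12}, {4,5,7,11}, {1,3,6,8}, {1,2,6,8}, {1,5,7,8}, {1,2,7,8}, {1,2,6,7}, {1,4,5,7}, {1,4,6,7}]) :=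
    constr_step 3 [{7,11,13,14}, {7,8,11,14}, {5,7,8,11}, {5,8,9,11}, {3,5,8,9}, {3,6,8,9}, {6,8,9,12}, {8,9,11,14}, {5,9,11,14}, {7,10,11,13}, {4,10,11,13}, {1,3,5,8}, {4,11,13,14}, {4,7,10,11}, {4,5,11,14}, {8,9,12,14}, {5,9,12,14}, {3,5,9,12}, {4,5,7,11}, {1,3,6,8}, {1,2,6,8}, {1,5,7,8}, {1,2,7,8}, {1,2,6,7}, {1,4,5,7}] [{1,4,7}, {1,6,7}] {1,4,6,7} (by decide) (by decide)
      (by rw [interC_genC]; exact genC_eq (by decide) (by decide))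
      (hasDim_genC 2 _ (by decide) (by decide)) h24 (constr_two 1 {1,4,7} {1,6,7} (by decide) (by decide) (by decide))
  have h26 : Constructible 3 (genC [{7,11,13,14}, {7,8,11,14}, {5,7,8,11}, {5,8,9,11}, {3,5,8,9}, {3,6,8,9}, {6,8,9,12}, {8,9,11,14}, {5,9,11,14}, {7,10,11,13}, {4,10,11,13}, {1,3,5,8}, {4,11,13,14}, {4,7,10,11}, {4,5,11,14}, {8,9,12,14}, {5,9,12,14}, {3,5,9,12}, {4,5,7,11}, {1,3,6,8}, {1,2,6,8}, {1,5,7,8}, {1,2,7,8}, {1,2,6,7}, {1,4,5,7}, {1,4,6,7}, {1,3,4,6}]) :=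
    constr_step 3 [{7,11,13,14}, {7,8,11,14}, {5,7,8,11}, {5,8,9,11}, {3,5,8,9}, {3,6,8,9}, {6,8,9,12}, {8,9,11,14}, {5,9,11,14}, {7,10,11,13}, {4,10,11,13}, {1,3,5,8}, {4,11,13,14}, {4,7,10,11}, {4,5,11,14}, {8,9,12,14}, {5,9,12,14}, {3,5,9,12}, {4,5,7,11}, {1,3,6,8}, {1,2,6,8}, {1,5,7,8}, {1,2,7,8}, {1,2,6,7}, {1,4,5,7}, {1,4,6,7}] [{1,3,6}, {1,4,6}] {1,3,4,6} (by decide) (by decide)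
      (by rw [interC_genC]; exact genC_eq (by decide) (by decide))
      (hasDim_genC 2 _ (by decide) (by decide)) h25 (constr_two 1 {1,3,6} {1,4,6} (by decide) (by decide) (by decide))
  have h27 : Constructible 3 (genC [{7,11,13,14}, {7,8,11,14}, {5,7,8,11}, {5,8,9,11}, {3,5,8,9}, {3,6,8,9}, {6,8,9,12}, {8,9,11,14}, {5,9,11,14}, {7,10,11,13}, {4,10,11,13}, {1,3,5,8}, {4,11,13,14}, {4,7,10,11}, {4,5,11,14}, {8,9,12,14}, {5,9,12,14}, {3,5,9,12}, {4,5,7,11}, {1,3,6,8}, {1,2,6,8}, {1,5,7,8}, {1,2,7,8}, {1,2,6,7}, {1,4,5,7}, {1,4,6,7}, {1,3,4,6}, {4,6,7,10}]) :=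
    constr_step 3 [{7,11,13,14}, {7,8,11,14}, {5,7,8,11}, {5,8,9,11}, {3,5,8,9}, {3,6,8,9}, {6,8,9,12}, {8,9,11,14}, {5,9,11,14}, {7,10,11,13}, {4,10,11,13}, {1,3,5,8}, {4,11,13,14}, {4,7,10,11}, {4,5,11,14}, {8,9,12,14}, {5,9,12,14}, {3,5,9,12}, {4,5,7,11}, {1,3,6,8}, {1,2,6,8}, {1,5,7,8}, {1,2,7,8}, {1,2,6,7}, {1,4,5,7}, {1,4,6,7}, {1,3,4,6}] [{4,6,7}, {4,7,10}] {4,6,7,10} (by decide) (by decide)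
      (by rw [interC_genC]; exact genC_eq (by decide) (by decide))
      (hasDim_genC 2 _ (by decide) (by decide)) h26 (constr_two 1 {4,6,7} {4,7,10} (by decide) (by decide) (by decide))
  have h28 : Constructible 3 (genC [{7,11,13,14}, {7,8,11,14}, {5,7,8,11}, {5,8,9,11}, {3,5,8,9}, {3,6,8,9}, {6,8,9,12}, {8,9,11,14}, {5,9,11,14}, {7,10,11,13}, {4,10,11,13}, {1,3,5,8}, {4,11,13,14}, {4,7,10,11}, {4,5,11,14}, {8,9,12,14}, {5,9,12,14}, {3,5,9,12}, {4,5,7,11}, {1,3,6,8}, {1,2,6,8}, {1,5,7,8}, {1,2,7,8}, {1,2,6,7}, {1,4,5,7}, {1,4,6,7}, {1,3,4,6}, {4,6,7,10}, {6,7,10,13}]) :=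
    constr_step 3 [{7,11,13,14}, {7,8,11,14}, {5,7,8,11}, {5,8,9,11}, {3,5,8,9}, {3,6,8,9}, {6,8,9,12}, {8,9,11,14}, {5,9,11,14}, {7,10,11,13}, {4,10,11,13}, {1,3,5,8}, {4,11,13,14}, {4,7,10,11}, {4,5,11,14}, {8,9,12,14}, {5,9,12,14}, {3,5,9,12}, {4,5,7,11}, {1,3,6,8}, {1,2,6,8}, {1,5,7,8}, {1,2,7,8}, {1,2,6,7}, {1,4,5,7}, {1,4,6,7}, {1,3,4,6}, {4,6,7,10}] [{6,7,10}, {7,10,13}] {6,7,10,13} (by decide) (by decide)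
      (by rw [interC_genC]; exact genC_eq (by decide) (by decide))
      (hasDim_genC 2 _ (by decide) (by decide)) h27 (constr_two 1 {6,7,10} {7,10,13} (by decide) (by decide) (by decide))
  have h29 : Constructible 3 (genC [{7,11,13,14}, {7,8,11,14}, {5,7,8,11}, {5,8,9,11}, {3,5,8,9}, {3,6,8,9}, {6,8,9,12}, {8,9,11,14}, {5,9,11,14}, {7,10,11,13}, {4,10,11,13}, {1,3,5,8}, {4,11,13,14}, {4,7,10,11}, {4,5,11,14}, {8,9,12,14}, {5,9,12,14}, {3,5,9,12}, {4,5,7,11}, {1,3,6,8}, {1,2,6,8}, {1,5,7,8}, {1,2,7,8}, {1,2,6,7}, {1,4,5,7}, {1,4,6,7}, {1,3,4,6}, {4,6,7,10}, {6,7,10,13}, {3,4,6,10}]) :=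
    constr_step 3 [{7,11,13,14}, {7,8,11,14}, {5,7,8,11}, {5,8,9,11}, {3,5,8,9}, {3,6,8,9}, {6,8,9,12}, {8,9,11,14}, {5,9,11,14}, {7,10,11,13}, {4,10,11,13}, {1,3,5,8}, {4,11,13,14}, {4,7,10,11}, {4,5,11,14}, {8,9,12,14}, {5,9,12,14}, {3,5,9,12}, {4,5,7,11}, {1,3,6,8}, {1,2,6,8}, {1,5,7,8}, {1,2,7,8}, {1,2,6,7}, {1,4,5,7}, {1,4,6,7}, {1,3,4,6}, {4,6,7,10}, {6,7,10,13}] [{3,4,6}, {4,6,10}] {3,4,6,10} (by decide) (by decide)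
      (by rw [interC_genC]; exact genC_eq (by decide) (by decide))
      (hasDim_genC 2 _ (by decide) (by decide)) h28 (constr_two 1 {3,4,6} {4,6,10} (by decide) (by decide) (by decide))
  have h30 : Constructible 3 (genC [{7,11,13,14}, {7,8,11,14}, {5,7,8,11}, {5,8,9,11}, {3,5,8,9}, {3,6,8,9}, {6,8,9,12}, {8,9,11,14}, {5,9,11,14}, {7,10,11,13}, {4,10,11,13}, {1,3,5,8}, {4,11,13,14}, {4,7,10,11}, {4,5,11,14}, {8,9,12,14}, {5,9,12,14}, {3,5,9,12}, {4,5,7,11}, {1,3,6,8}, {1,2,6,8}, {1,5,7,8}, {1,2,7,8}, {1,2,6,7}, {1,4,5,7}, {1,4,6,7}, {1,3,4,6}, {4,6,7,10}, {6,7,10,13}, {3,4,6,10}, {3,4,10,13}]) :=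
    constr_step 3 [{7,11,13,14}, {7,8,11,14}, {5,7,8,11}, {5,8,9,11}, {3,5,8,9}, {3,6,8,9}, {6,8,9,12}, {8,9,11,14}, {5,9,11,14}, {7,10,11,13}, {4,10,11,13}, {1,3,5,8}, {4,11,13,14}, {4,7,10,11}, {4,5,11,14}, {8,9,12,14}, {5,9,12,14}, {3,5,9,12}, {4,5,7,11}, {1,3,6,8}, {1,2,6,8}, {1,5,7,8}, {1,2,7,8}, {1,2,6,7}, {1,4,5,7}, {1,4,6,7}, {1,3,4,6}, {4,6,7,10}, {6,7,10,13}, {3,4,6,10}] [{3,4,10}, {4,10,13}] {3,4,10,13} (by decide) (by decide)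
      (by rw [interC_genC]; exact genC_eq (by decide) (by decide))
      (hasDim_genC 2 _ (by decide) (by decide)) h29 (constr_two 1 {3,4,10} {4,10,13} (by decide) (by decide) (by decide))
  have h31 : Constructible 3 (genC [{7,11,13,14}, {7,8,11,14}, {5,7,8,11}, {5,8,9,11}, {3,5,8,9}, {3,6,8,9}, {6,8,9,12}, {8,9,11,14}, {5,9,11,14}, {7,10,11,13}, {4,10,11,13}, {1,3,5,8}, {4,11,13,14}, {4,7,10,11}, {4,5,11,14}, {8,9,12,14}, {5,9,12,14}, {3,5,9,12}, {4,5,7,11}, {1,3,6,8}, {1,2,6,8}, {1,5,7,8}, {1,2,7,8}, {1,2,6,7}, {1,4,5,7}, {1,4,6,7}, {1,3,4,6}, {4,6,7,10}, {6,7,10,13}, {3,4,6,10}, {3,4,10,13}, {3,6,9,10}]) :=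
    constr_step 3 [{7,11,13,14}, {7,8,11,14}, {5,7,8,11}, {5,8,9,11}, {3,5,8,9}, {3,6,8,9}, {6,8,9,12}, {8,9,11,14}, {5,9,11,14}, {7,10,11,13}, {4,10,11,13}, {1,3,5,8}, {4,11,13,14}, {4,7,10,11}, {4,5,11,14}, {8,9,12,14}, {5,9,12,14}, {3,5,9,12}, {4,5,7,11}, {1,3,6,8}, {1,2,6,8}, {1,5,7,8}, {1,2,7,8}, {1,2,6,7}, {1,4,5,7}, {1,4,6,7}, {1,3,4,6}, {4,6,7,10}, {6,7,10,13}, {3,4,6,10}, {3,4,10,13}] [{3,6,9}, {3,6,10}] {3,6,9,10} (by decide) (by decide)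
      (by rw [interC_genC]; exact genC_eq (by decide) (by decide))
      (hasDim_genC 2 _ (by decide) (by decide)) h30 (constr_two 1 {3,6,9} {3,6,10} (by decide) (by decide) (by decide))
  have h32 : Constructible 3 (genC [{7,11,13,14}, {7,8,11,14}, {5,7,8,11}, {5,8,9,11}, {3,5,8,9}, {3,6,8,9}, {6,8,9,12}, {8,9,11,14}, {5,9,11,14}, {7,10,11,13}, {4,10,11,13}, {1,3,5,8}, {4,11,13,14}, {4,7,10,11}, {4,5,11,14}, {8,9,12,14}, {5,9,12,14}, {3,5,9,12}, {4,5,7,11}, {1,3,6,8}, {1,2,6,8}, {1,5,7,8}, {1,2,7,8}, {1,2,6,7}, {1,4,5,7}, {1,4,6,7}, {1,3,4,6}, {4,6,7,10}, {6,7,10,13}, {3,4,6,10}, {3,4,10,13}, {3,6,9,10}, {6,9,10,12}]) :=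
    constr_step 3 [{7,11,13,14}, {7,8,11,14}, {5,7,8,11}, {5,8,9,11}, {3,5,8,9}, {3,6,8,9}, {6,8,9,12}, {8,9,11,14}, {5,9,11,14}, {7,10,11,13}, {4,10,11,13}, {1,3,5,8}, {4,11,13,14}, {4,7,10,11}, {4,5,11,14}, {8,9,12,14}, {5,9,12,14}, {3,5,9,12}, {4,5,7,11}, {1,3,6,8}, {1,2,6,8}, {1,5,7,8}, {1,2,7,8}, {1,2,6,7}, {1,4,5,7}, {1,4,6,7}, {1,3,4,6}, {4,6,7,10}, {6,7,10,13}, {3,4,6,10}, {3,4,10,13}, {3,6,9,10}] [{6,9,10}, {6,9,12}] {6,9,10,12} (by decide) (by decide)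
      (by rw [interC_genC]; exact genC_eq (by decide) (by decide))
      (hasDim_genC 2 _ (by decide) (by decide)) h31 (constr_two 1 {6,9,10} {6,9,12} (by decide) (by decide) (by decide))
  have h33 : Constructible 3 (genC [{7,11,13,14}, {7,8,11,14}, {5,7,8,11}, {5,8,9,11}, {3,5,8,9}, {3,6,8,9}, {6,8,9,12}, {8,9,11,14}, {5,9,11,14}, {7,10,11,13}, {4,10,11,13}, {1,3,5,8}, {4,11,13,14}, {4,7,10,11}, {4,5,11,14}, {8,9,12,14}, {5,9,12,14}, {3,5,9,12}, {4,5,7,11}, {1,3,6,8}, {1,2,6,8}, {1,5,7,8}, {1,2,7,8}, {1,2,6,7}, {1,4,5,7}, {1,4,6,7}, {1,3,4,6}, {4,6,7,10}, {6,7,10,13}, {3,4,6,10}, {3,4,10,13}, {3,6,9,10}, {6,9,10,12}, {6,10,12,13}]) :=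
    constr_step 3 [{7,11,13,14}, {7,8,11,14}, {5,7,8,11}, {5,8,9,11}, {3,5,8,9}, {3,6,8,9}, {6,8,9,12}, {8,9,11,14}, {5,9,11,14}, {7,10,11,13}, {4,10,11,13}, {1,3,5,8}, {4,11,13,14}, {4,7,10,11}, {4,5,11,14}, {8,9,12,14}, {5,9,12,14}, {3,5,9,12}, {4,5,7,11}, {1,3,6,8}, {1,2,6,8}, {1,5,7,8}, {1,2,7,8}, {1,2,6,7}, {1,4,5,7}, {1,4,6,7}, {1,3,4,6}, {4,6,7,10}, {6,7,10,13}, {3,4,6,10}, {3,4,10,13}, {3,6,9,10}, {6,9,10,12}] [{6,10,12}, {6,10,13}] {6,10,12,13} (by decide) (by decide)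
      (by rw [interC_genC]; exact genC_eq (by decide) (by decide))
      (hasDim_genC 2 _ (by decide) (by decide)) h32 (constr_two 1 {6,10,12} {6,10,13} (by decide) (by decide) (by decide))
  have h34 : Constructible 3 (genC [{7,11,13,14}, {7,8,11,14}, {5,7,8,11}, {5,8,9,11}, {3,5,8,9}, {3,6,8,9}, {6,8,9,12}, {8,9,11,14}, {5,9,11,14}, {7,10,11,13}, {4,10,11,13}, {1,3,5,8}, {4,11,13,14}, {4,7,10,11}, {4,5,11,14}, {8,9,12,14}, {5,9,12,14}, {3,5,9,12}, {4,5,7,11}, {1,3,6,8}, {1,2,6,8}, {1,5,7,8}, {1,2,7,8}, {1,2,6,7}, {1,4,5,7}, {1,4,6,7}, {1,3,4,6}, {4,6,7,10}, {6,7,10,13}, {3,4,6,10}, {3,4,10,13}, {3,6,9,10}, {6,9,10,12}, {6,10,12,13}, {3,9,10,12}]) :=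
    constr_step 3 [{7,11,13,14}, {7,8,11,14}, {5,7,8,11}, {5,8,9,11}, {3,5,8,9}, {3,6,8,9}, {6,8,9,12}, {8,9,11,14}, {5,9,11,14}, {7,10,11,13}, {4,10,11,13}, {1,3,5,8}, {4,11,13,14}, {4,7,10,11}, {4,5,11,14}, {8,9,12,14}, {5,9,12,14}, {3,5,9,12}, {4,5,7,11}, {1,3,6,8}, {1,2,6,8}, {1,5,7,8}, {1,2,7,8}, {1,2,6,7}, {1,4,5,7}, {1,4,6,7}, {1,3,4,6}, {4,6,7,10}, {6,7,10,13}, {3,4,6,10}, {3,4,10,13}, {3,6,9,10}, {6,9,10,12}, {6,10,12,13}] [{3,9,10}, {3,9,12}, {9,10,12}] {3,9,10,12} (by decide) (by decide)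
      (by rw [interC_genC]; exact genC_eq (by decide) (by decide))
      (hasDim_genC 2 _ (by decide) (by decide)) h33 (constr_three {3,9,10} {3,9,12} {9,10,12} (by decide) (by decide) (by decide) (by decide) (by decide) (by decide) (by decide))
  have h35 : Constructible 3 (genC [{7,11,13,14}, {7,8,11,14}, {5,7,8,11}, {5,8,9,11}, {3,5,8,9}, {3,6,8,9}, {6,8,9,12}, {8,9,11,14}, {5,9,11,14}, {7,10,11,13}, {4,10,11,13}, {1,3,5,8}, {4,11,13,14}, {4,7,10,11}, {4,5,11,14}, {8,9,12,14}, {5,9,12,14}, {3,5,9,12}, {4,5,7,11}, {1,3,6,8}, {1,2,6,8}, {1,5,7,8}, {1,2,7,8}, {1,2,6,7}, {1,4,5,7}, {1,4,6,7}, {1,3,4,6}, {4,6,7,10}, {6,7,10,13}, {3,4,6,10}, {3,4,10,13}, {3,6,9,10}, {6,9,10,12}, {6,10,12,13}, {3,9,10,12}, {3,10,12,13}]) :=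
    constr_step 3 [{7,11,13,14}, {7,8,11,14}, {5,7,8,11}, {5,8,9,11}, {3,5,8,9}, {3,6,8,9}, {6,8,9,12}, {8,9,11,14}, {5,9,11,14}, {7,10,11,13}, {4,10,11,13}, {1,3,5,8}, {4,11,13,14}, {4,7,10,11}, {4,5,11,14}, {8,9,12,14}, {5,9,12,14}, {3,5,9,12}, {4,5,7,11}, {1,3,6,8}, {1,2,6,8}, {1,5,7,8}, {1,2,7,8}, {1,2,6,7}, {1,4,5,7}, {1,4,6,7}, {1,3,4,6}, {4,6,7,10}, {6,7,10,13}, {3,4,6,10}, {3,4,10,13}, {3,6,9,10}, {6,9,10,12}, {6,10,12,13}, {3,9,10,12}] [{3,10,12}, {3,10,13}, {10,12,13}] {3,10,12,13} (by decide) (by decide)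
      (by rw [interC_genC]; exact genC_eq (by decide) (by decide))
      (hasDim_genC 2 _ (by decide) (by decide)) h34 (constr_three {3,10,12} {3,10,13} {10,12,13} (by decide) (by decide) (by decide) (by decide) (by decide) (by decide) (by decide))
  exact h35


/-- The 3-ball of Example 3.2 is shellable, hence constructible. -/
theorem exComplex_shellable_constructible :
    Shellable 3 exComplex ∧ Constructible 3 exComplex := by
  have hEx : exComplex = genC exFacets := SComplex.ext'_s14 rfl
  constructor
  · refine ⟨36, shellF, by norm_num, shellF_inj, ?_, ?_, ?_⟩
    · intro i
      obtain ⟨h1, h2, h3⟩ := shellF_mem i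
      exact ⟨⟨h1, h2⟩, h3⟩
    · intro s
      rw [hEx, mem_genC]
      constructor
      · rintro ⟨hne, u, hu, hsu⟩
        obtain ⟨i, hi⟩ := exFacets_to_shellF u hu
        exact ⟨hne, i, hsu.trans hi⟩
      · rintro ⟨hne, i, hsi⟩
        obtain ⟨u, hu, hui⟩ := shellF_to_exFacets i
        exact ⟨hne, u, hu, hsi.trans hui⟩
    · intro k hk
      obtain ⟨⟨s, hsp, hsne, j, hj, hsj⟩, H⟩ := shell_cond k hk
      refine ⟨⟨s, hsne, Finset.mem_powerset.mp hsp, j, hj, hsj⟩, ?_⟩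
      rintro s ⟨hne, hsk, j, hj, hsj⟩
      obtain ⟨u, hup, hsu, huc, j', hj', huj⟩ :=
        H s (Finset.mem_powerset.mpr hsk) ⟨hne, j, hj, hsj⟩
      exact ⟨u, hsu, huc, Finset.mem_powerset.mp hup, j', hj', huj⟩
  · have e2 : genC exFacets = genC shellList := genC_eq (by decide) (by decide)
    rw [hEx, e2]
    exact constr_main

end SCPaper
end
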